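/- arXiv:2409.00534 — 2 statements merged into one kernel-verified Lean document; each statement's English description precedes it below -/
import Mathlib

section
/- Every connected r-edge-colorable r-regular graph with at least r−1 solitary classes is uniquely r-edge-colorable (its proper r-edge-coloring is unique up to permutation of colors). -/
/-- The underlying simple graph of a multigraph given by `ends`. -/
def toSimple {V E : Type} (ends : E → Sym2 V) : SimpleGraph V where
  Adj u w := u ≠ w ∧ ∃ e, ends e = s(u, w)
  symm := by
    constructor
    rintro u w ⟨hne, e, he⟩
    exact ⟨hne.symm, e, by rw [he]; exact Sym2.eq_swap⟩
  loopless := by constructor; rintro u ⟨hne, -⟩; exact hne rfl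

/-- A perfect matching: every vertex is incident with exactly one edge of `M`. -/
def IsPM {V E : Type} (ends : E → Sym2 V) (M : Set E) : Prop :=
  ∀ v : V, ∃! e, e ∈ M ∧ v ∈ ends e

/-- A matching covered graph: connected, of order at least two, and every edge
lies in some perfect matching. -/
def IsMC {V E : Type} (ends : E → Sym2 V) : Prop :=
  (toSimple ends).Connected ∧ 2 ≤ Nat.card V ∧ ∀ e, ∃ M, IsPM ends M ∧ e ∈ M

/-- Edge `e` depends on edge `f`: every perfect matching containing `e` also
contains `f`. -/
def Dep {V E : Type} (ends : E → Sym2 V) (e f : E) : Prop :=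
  ∀ M, IsPM ends M → e ∈ M → f ∈ M

/-- Edges `e` and `f` are mutually dependent. -/
def MutDep {V E : Type} (ends : E → Sym2 V) (e f : E) : Prop :=
  Dep ends e f ∧ Dep ends f e

/-- A solitary edge: it lies in exactly one perfect matching. -/
def Solitary {V E : Type} (ends : E → Sym2 V) (e : E) : Prop :=
  ∃! M, IsPM ends M ∧ e ∈ M

/-- Degree of a vertex (counting multiplicities). -/
noncomputable def deg {V E : Type} (ends : E → Sym2 V) (v : V) : ℕ :=
  {e | v ∈ ends e}.ncard

/-- A proper edge coloring: edges sharing a vertex get different colors. -/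
def Proper {V E : Type} (ends : E → Sym2 V) {r : ℕ} (c : E → Fin r) : Prop :=
  ∀ e f, e ≠ f → (∃ v, v ∈ ends e ∧ v ∈ ends f) → c e ≠ c f

/-
A proper `r`-edge-colouring of an `r`-regular graph splits the edges into `r` perfect matchings.
A solitary edge lies in only one perfect matching, so every colouring has that matching as a
colour class; distinct solitary classes give distinct such matchings. Hence any two colourings
share at least `r - 1` colour classes, and the last class of each is the complement of the
shared ones, so the two colourings induce the same partition of the edges.
-/

open Function

section Fibers

variable {α ι : Type*}

def sharedColors (c₁ c₂ : α → ι) : Set ι :=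
  {j | ∃ i, c₂ ⁻¹' {j} = c₁ ⁻¹' {i}}

lemma Set.subsingleton_compl_of_card_sub_one_le [Finite ι] {s : Set ι}
    (hs : Nat.card ι - 1 ≤ s.ncard) : sᶜ.Subsingleton := by
  rw [← Set.ncard_le_one_iff_subsingleton]
  have := Set.ncard_add_ncard_compl s
  omega

lemma exists_perm_comp_eq_of_fiber_subset [Finite ι] {c₁ c₂ : α → ι}
    (hc₁ : Surjective c₁) (hc₂ : Surjective c₂) (h : ∀ a b, c₁ a = c₁ b → c₂ a = c₂ b) :
    ∃ σ : Equiv.Perm ι, ∀ a, c₂ a = σ (c₁ a) := by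
  set g : ι → ι := c₂ ∘ surjInv hc₁
  have hg : ∀ a, g (c₁ a) = c₂ a := fun a => h _ _ (surjInv_eq hc₁ (c₁ a))
  have hg_surj : Surjective g := fun j => by
    obtain ⟨a, rfl⟩ := hc₂ j
    exact ⟨c₁ a, hg a⟩
  exact ⟨Equiv.ofBijective g (Finite.surjective_iff_bijective.mp hg_surj), fun a => (hg a).symm⟩

lemma exists_perm_comp_eq_of_card_sub_one_le_sharedColors [Finite ι] {c₁ c₂ : α → ι}
    (hc₁ : Surjective c₁) (hc₂ : Surjective c₂)
    (hshared : Nat.card ι - 1 ≤ (sharedColors c₁ c₂).ncard) :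
    ∃ σ : Equiv.Perm ι, ∀ a, c₂ a = σ (c₁ a) := by
  have of_shared : ∀ a b, c₁ a = c₁ b → c₂ a ∈ sharedColors c₁ c₂ → c₂ a = c₂ b := by
    rintro a b hab ⟨i, hi⟩
    have ha : a ∈ c₁ ⁻¹' {i} := hi ▸ rfl
    have hb : b ∈ c₂ ⁻¹' {c₂ a} := hi ▸ hab.symm.trans ha
    exact hb.symm
  refine exists_perm_comp_eq_of_fiber_subset hc₁ hc₂ fun a b hab => ?_
  by_cases ha : c₂ a ∈ sharedColors c₁ c₂
  · exact of_shared a b hab ha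
  by_cases hb : c₂ b ∈ sharedColors c₁ c₂
  · exact (of_shared b a hab.symm hb).symm
  exact Set.subsingleton_compl_of_card_sub_one_le hshared ha hb

end Fibers

section Matchings

variable {V E : Type} {ends : E → Sym2 V}

lemma Dep.trans {e f g : E} (hef : Dep ends e f) (hfg : Dep ends f g) : Dep ends e g :=
  fun M hM he => hfg M hM (hef M hM he)

lemma MutDep.symm {e f : E} (h : MutDep ends e f) : MutDep ends f e :=
  And.symm h

lemma MutDep.trans {e f g : E} (hef : MutDep ends e f) (hfg : MutDep ends f g) :
    MutDep ends e g :=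
  ⟨hef.1.trans hfg.1, hfg.2.trans hef.2⟩

lemma MutDep.setOf_eq {e e' : E} (h : MutDep ends e e') :
    {f | MutDep ends e f} = {f | MutDep ends e' f} :=
  Set.ext fun _ => ⟨h.symm.trans, h.trans⟩

lemma Solitary.dep_of_mem {e f : E} (he : Solitary ends e) {M : Set E} (hM : IsPM ends M)
    (heM : e ∈ M) (hfM : f ∈ M) : Dep ends e f :=
  fun _ hN heN => he.unique ⟨hM, heM⟩ ⟨hN, heN⟩ ▸ hfM

lemma Proper.isPM_preimage {r : ℕ} {c : E → Fin r} (hc : Proper ends c)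
    (hreg : ∀ v, deg ends v = r) (i : Fin r) : IsPM ends (c ⁻¹' {i}) := by
  intro v
  have hinj : Set.InjOn c {e | v ∈ ends e} := fun e he f hf hef => by
    by_contra hne
    exact hc e f hne ⟨v, he, hf⟩ hef
  have himg : c '' {e | v ∈ ends e} = Set.univ := by
    refine Set.eq_of_subset_of_ncard_le (Set.subset_univ _) ?_
    rw [hinj.ncard_image, Set.ncard_univ, Nat.card_fin, ← hreg v, deg]
  obtain ⟨e, he, hce⟩ := himg ▸ Set.mem_univ i
  exact ⟨e, ⟨hce, he⟩, fun f ⟨hcf, hf⟩ => hinj hf he (hcf.trans hce.symm)⟩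

lemma Proper.surjective [Nonempty V] {r : ℕ} {c : E → Fin r} (hc : Proper ends c)
    (hreg : ∀ v, deg ends v = r) : Surjective c := fun i => by
  obtain ⟨e, ⟨hce, -⟩, -⟩ := hc.isPM_preimage hreg i (Classical.arbitrary V)
  exact ⟨e, hce⟩

/-- A solitary edge's only perfect matching is a colour class of every proper colouring. -/
lemma Solitary.preimage_eq {r : ℕ} {c₁ c₂ : E → Fin r} {e : E} (he : Solitary ends e)
    (hreg : ∀ v, deg ends v = r) (hc₁ : Proper ends c₁) (hc₂ : Proper ends c₂) :
    c₂ ⁻¹' {c₂ e} = c₁ ⁻¹' {c₁ e} :=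
  he.unique ⟨hc₂.isPM_preimage hreg _, rfl⟩ ⟨hc₁.isPM_preimage hreg _, rfl⟩

def solitaryClasses (ends : E → Sym2 V) : Set (Set E) :=
  {S | ∃ e, Solitary ends e ∧ S = {f | MutDep ends e f}}

lemma ncard_solitaryClasses_le_ncard_sharedColors {r : ℕ} {c₁ c₂ : E → Fin r}
    (hreg : ∀ v, deg ends v = r) (hc₁ : Proper ends c₁) (hc₂ : Proper ends c₂) :
    (solitaryClasses ends).ncard ≤ (sharedColors c₁ c₂).ncard := by
  let color : solitaryClasses ends → sharedColors c₁ c₂ := fun S =>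
    ⟨c₂ S.2.choose, _, S.2.choose_spec.1.preimage_eq hreg hc₁ hc₂⟩
  refine Nat.card_le_card_of_injective color fun S S' hSS' => Subtype.ext ?_
  obtain ⟨he, hS⟩ := S.2.choose_spec
  obtain ⟨he', hS'⟩ := S'.2.choose_spec
  have hM := hc₂.isPM_preimage hreg (c₂ S.2.choose)
  have he'M : S'.2.choose ∈ c₂ ⁻¹' {c₂ S.2.choose} := congrArg Subtype.val hSS'.symm
  rw [hS, hS']
  exact MutDep.setOf_eq ⟨he.dep_of_mem hM rfl he'M, he'.dep_of_mem hM he'M rfl⟩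

end Matchings

theorem stmt10_general {V E : Type}
    (ends : E → Sym2 V) (r : ℕ)
    (hreg : ∀ v, deg ends v = r)
    (hclasses : r - 1 ≤
      {S : Set E | ∃ e, Solitary ends e ∧ S = {f | MutDep ends e f}}.ncard) :
    ∀ c₁ c₂ : E → Fin r, Proper ends c₁ → Proper ends c₂ →
      ∃ σ : Equiv.Perm (Fin r), ∀ e, c₂ e = σ (c₁ e) := by
  intro c₁ c₂ hc₁ hc₂
  rcases isEmpty_or_nonempty V with hV | hV
  · exact ⟨1, fun e => isEmptyElim (ends e)⟩
  refine exists_perm_comp_eq_of_card_sub_one_le_sharedColors (hc₁.surjective hreg)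
    (hc₂.surjective hreg) ?_
  rw [Nat.card_fin]
  exact hclasses.trans (ncard_solitaryClasses_le_ncard_sharedColors hreg hc₁ hc₂)

/-- Every connected `r`-edge-colorable `r`-regular multigraph with at least
`r − 1` solitary classes is uniquely `r`-edge-colorable: any two proper
`r`-edge-colorings agree up to a permutation of the colors. -/
theorem stmt10 {V E : Type} [Fintype V] [Fintype E]
    (ends : E → Sym2 V) (r : ℕ)
    (hconn : (toSimple ends).Connected) (hreg : ∀ v, deg ends v = r)
    (hcol : ∃ c : E → Fin r, Proper ends c)
    (hclasses : r - 1 ≤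
      {S : Set E | ∃ e, Solitary ends e ∧ S = {f | MutDep ends e f}}.ncard) :
    ∀ c₁ c₂ : E → Fin r, Proper ends c₁ → Proper ends c₂ →
      ∃ σ : Equiv.Perm (Fin r), ∀ e, c₂ e = σ (c₁ e) :=
  stmt10_general ends r hreg hclasses
end

section
/- For any odd cut C = ∂(X) of an r-graph G with |C| = r, both C-contractions G/X and G/X̄ are r-graphs; moreover, if G is 3-edge-connected then both contractions are 3-edge-connected. -/
noncomputable section
open scoped Classical

/-- The edge cut `∂(X)`. -/
def Cut {V E : Type} (ends : E → Sym2 V) (X : Set V) : Set E :=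
  {e | ∃ u ∈ X, ∃ w, w ∉ X ∧ ends e = s(u, w)}

/-- An `r`-graph: a loopless connected `r`-regular multigraph in which every odd
cut has at least `r` edges. -/
def IsRGraph {V E : Type} (r : ℕ) (ends : E → Sym2 V) : Prop :=
  (∀ e, ¬ (ends e).IsDiag) ∧ (toSimple ends).Connected ∧
    (∀ v, deg ends v = r) ∧ ∀ X : Set V, Odd X.ncard → r ≤ (Cut ends X).ncard

/-- The vertex map of the contraction `G/X`: all of `X` is shrunk to a single
new vertex, the other vertices are kept. -/
noncomputable def contractVert {V : Type} (X : Set V) (v : V) : ↥Xᶜ ⊕ Unit :=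
  if h : v ∈ X then Sum.inr () else Sum.inl ⟨v, h⟩

/-- The contraction `G/X`: the shore `X` is shrunk to a single contraction
vertex; the edges inside `X` disappear. -/
noncomputable def contractEnds {V E : Type} (ends : E → Sym2 V) (X : Set V) :
    {e : E // ¬ ∀ v ∈ ends e, v ∈ X} → Sym2 (↥Xᶜ ⊕ Unit) :=
  fun e => (ends e.val).map (contractVert X)

/-- `G` is 3-edge-connected: connected and every cut separating two nonempty
shores has at least three edges. -/
def ThreeEdgeConnected {V E : Type} (ends : E → Sym2 V) : Prop :=
  (toSimple ends).Connected ∧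
    ∀ X : Set V, X.Nonempty → Xᶜ.Nonempty → 3 ≤ (Cut ends X).ncard

/-!
Every cut of `G/X` is the cut of its preimage in `G`, with the same edges. The fibres of the
contraction map have sizes `1` and `|X|`, both odd, so preimages of odd shores are odd, and the
contracted vertex has degree `|∂(X)| = r`. The other contraction `G/X̄` is handled in the same way:
`∂(X̄) = ∂(X)`, and `|X̄|` is odd because an `r`-graph with `r > 0` has an even number of vertices
(otherwise the empty cut `∂(V)` would have an odd shore).
-/

lemma odd_ncard_preimage_iff {α β : Type*} [Finite α] [Finite β] {f : α → β}
    (hf : ∀ b, Odd (f ⁻¹' {b}).ncard) (Y : Set β) : Odd (f ⁻¹' Y).ncard ↔ Odd Y.ncard := by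
  obtain ⟨s, rfl⟩ : ∃ s : Finset β, ↑s = Y := ⟨Y.toFinite.toFinset, by simp⟩
  rw [Set.ncard_coe_finset, ← Nat.card_coe_set_eq,
    Finset.card_preimage_eq_sum_card_image_eq fun b _ => Set.toFinite _,
    Finset.odd_sum_iff_odd_card_odd,
    Finset.filter_true_of_mem (p := fun b => Odd (Nat.card {a // f a = b})) fun b _ => hf b]

lemma SimpleGraph.Reachable.map_of_adj {V W : Type*} {G : SimpleGraph V} {H : SimpleGraph W}
    {f : V → W}
    (hf : ∀ u w, G.Adj u w → f u = f w ∨ H.Adj (f u) (f w)) {u w : V} (h : G.Reachable u w) :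
    H.Reachable (f u) (f w) := by
  rw [SimpleGraph.reachable_iff_reflTransGen] at h ⊢
  refine h.lift' f fun a b hab => ?_
  rcases hf a b hab with heq | hadj
  · rw [Function.onFun, heq]
  · exact .single hadj

lemma SimpleGraph.Connected.map_of_adj {V W : Type*} {G : SimpleGraph V} {H : SimpleGraph W}
    {f : V → W} (hG : G.Connected) (hsurj : f.Surjective)
    (hf : ∀ u w, G.Adj u w → f u = f w ∨ H.Adj (f u) (f w)) : H.Connected := by
  have : Nonempty W := hG.nonempty.map f
  refine ⟨fun a b => ?_⟩
  obtain ⟨u, rfl⟩ := hsurj a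
  obtain ⟨w, rfl⟩ := hsurj b
  exact (hG.preconnected u w).map_of_adj hf

variable {V W E : Type}

lemma mem_cut_iff {ends : E → Sym2 V} {X : Set V} {e : E} :
    e ∈ Cut ends X ↔ (∃ v ∈ ends e, v ∈ X) ∧ ∃ v ∈ ends e, v ∉ X := by
  simp only [Cut, Set.mem_ofPred_eq]
  generalize ends e = z
  induction z using Sym2.ind with
  | _ a b => simp only [Sym2.eq_iff, Sym2.mem_iff]; aesop

lemma cut_compl (ends : E → Sym2 V) (X : Set V) : Cut ends Xᶜ = Cut ends X := by
  ext e
  simp only [mem_cut_iff, Set.mem_compl_iff, not_not, and_comm]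

lemma cut_univ (ends : E → Sym2 V) : Cut ends Set.univ = ∅ := by
  ext e
  simp [mem_cut_iff]

lemma cut_map (ends : E → Sym2 V) (f : V → W) (Y : Set W) :
    Cut (fun e => (ends e).map f) Y = Cut ends (f ⁻¹' Y) := by
  ext e
  simp only [mem_cut_iff, Sym2.mem_map, Set.mem_preimage]
  aesop

lemma deg_eq_ncard_cut_singleton {ends : E → Sym2 V} (hloop : ∀ e, ¬ (ends e).IsDiag) (v : V) :
    deg ends v = (Cut ends {v}).ncard := by
  unfold deg
  congr 1
  ext e
  simp only [Set.mem_ofPred_eq, mem_cut_iff, Set.mem_singleton_iff, exists_eq_right]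
  exact ⟨fun hv => ⟨hv, _, Sym2.other_mem hv, Sym2.other_ne (hloop e) hv⟩, And.left⟩

section Contraction

variable {S : Set V}

lemma contractVert_of_mem {v : V} (hv : v ∈ S) : contractVert S v = Sum.inr () := dif_pos hv

lemma contractVert_preimage_inl (x : ↥Sᶜ) : contractVert S ⁻¹' {Sum.inl x} = {x.val} := by
  ext v
  by_cases hv : v ∈ S
  · have hvx : v ≠ x.val := fun h => x.prop (h ▸ hv)
    simp [contractVert, hv, hvx]
  · simp [contractVert, hv, Subtype.ext_iff]

lemma contractVert_preimage_inr : contractVert S ⁻¹' {Sum.inr ()} = S := by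
  ext v
  by_cases hv : v ∈ S <;> simp [contractVert, hv]

lemma contractVert_surjective (hS : S.Nonempty) : (contractVert S).Surjective := by
  rintro (x | ⟨⟩)
  · exact ⟨x.val, dif_neg x.prop⟩
  · exact ⟨hS.some, dif_pos hS.some_mem⟩

lemma contractVert_eq_contractVert {u w : V} (h : contractVert S u = contractVert S w) :
    u = w ∨ (u ∈ S ∧ w ∈ S) := by
  by_cases hu : u ∈ S <;> by_cases hw : w ∈ S <;> simp_all [contractVert]

lemma odd_ncard_preimage_contractVert_iff [Finite V] (hS : Odd S.ncard) (Y : Set (↥Sᶜ ⊕ Unit)) :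
    Odd (contractVert S ⁻¹' Y).ncard ↔ Odd Y.ncard := by
  refine odd_ncard_preimage_iff (fun b => ?_) Y
  rcases b with x | ⟨⟩
  · simp [contractVert_preimage_inl]
  · rwa [contractVert_preimage_inr]

variable (ends : E → Sym2 V)

lemma cut_contractEnds (Y : Set (↥Sᶜ ⊕ Unit)) :
    Cut (contractEnds ends S) Y = Subtype.val ⁻¹' Cut ends (contractVert S ⁻¹' Y) :=
  cut_map (fun e : {e // ¬ ∀ v ∈ ends e, v ∈ S} => ends e.val) (contractVert S) Y

lemma ncard_cut_contractEnds (Y : Set (↥Sᶜ ⊕ Unit)) :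
    (Cut (contractEnds ends S) Y).ncard = (Cut ends (contractVert S ⁻¹' Y)).ncard := by
  rw [cut_contractEnds]
  refine Set.ncard_preimage_of_injective_subset_range Subtype.val_injective ?_
  intro e he
  refine ⟨⟨e, fun hinside => ?_⟩, rfl⟩
  obtain ⟨⟨u, hu, huY⟩, w, hw, hwY⟩ := mem_cut_iff.mp he
  rw [Set.mem_preimage, contractVert_of_mem (hinside u hu)] at huY
  rw [Set.mem_preimage, contractVert_of_mem (hinside w hw)] at hwY
  exact hwY huY

lemma contractEnds_not_isDiag (hloop : ∀ e, ¬ (ends e).IsDiag)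
    (e : {e // ¬ ∀ v ∈ ends e, v ∈ S}) :
    ¬ (contractEnds ends S e).IsDiag := by
  obtain ⟨e, he⟩ := e
  simp only [contractEnds]
  generalize hz : ends e = z at he
  induction z using Sym2.ind with
  | _ u w =>
    rw [Sym2.map_mk, Sym2.mk_isDiag_iff]
    intro huw
    rcases contractVert_eq_contractVert huw with rfl | ⟨hu, hw⟩
    · exact hloop e (hz ▸ Sym2.mk_isDiag_iff.mpr rfl)
    · exact he fun v hv => by rcases Sym2.mem_iff.mp hv with rfl | rfl <;> assumption

lemma connected_contractEnds (hS : S.Nonempty) (hconn : (toSimple ends).Connected) :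
    (toSimple (contractEnds ends S)).Connected := by
  refine hconn.map_of_adj (contractVert_surjective hS) fun u w ⟨_, e, he⟩ => ?_
  by_cases huw : contractVert S u = contractVert S w
  · exact Or.inl huw
  · refine Or.inr ⟨huw, ⟨e, fun hinside => huw ?_⟩, ?_⟩
    · rw [contractVert_of_mem (hinside u (he ▸ Sym2.mem_mk_left u w)),
        contractVert_of_mem (hinside w (he ▸ Sym2.mem_mk_right u w))]
    · simp only [contractEnds, he, Sym2.map_mk]

end Contraction

variable {ends : E → Sym2 V} {r : ℕ}

lemma IsRGraph.odd_ncard_compl [Finite V] (hG : IsRGraph r ends) (hr : 0 < r) {X : Set V}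
    (hX : Odd X.ncard) : Odd Xᶜ.ncard := by
  have heven : ¬ Odd (Set.univ : Set V).ncard := fun h => by
    have := hG.2.2.2 _ h
    rw [cut_univ, Set.ncard_empty] at this
    omega
  rw [Set.ncard_univ, ← Set.ncard_add_ncard_compl X, Nat.odd_add] at heven
  simpa [hX] using heven

theorem IsRGraph.contract [Finite V] (hG : IsRGraph r ends) {S : Set V} (hS : Odd S.ncard)
    (hcut : (Cut ends S).ncard = r) : IsRGraph r (contractEnds ends S) := by
  obtain ⟨hloop, hconn, hdeg, hoddcut⟩ := hG
  have hloop' := contractEnds_not_isDiag (S := S) ends hloop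
  refine ⟨hloop', connected_contractEnds ends (Set.nonempty_of_ncard_ne_zero hS.pos.ne') hconn,
    fun a => ?_, fun Y hY => ?_⟩
  · rw [deg_eq_ncard_cut_singleton hloop', ncard_cut_contractEnds]
    rcases a with x | ⟨⟩
    · rw [contractVert_preimage_inl, ← deg_eq_ncard_cut_singleton hloop, hdeg]
    · rw [contractVert_preimage_inr, hcut]
  · rw [ncard_cut_contractEnds]
    exact hoddcut _ ((odd_ncard_preimage_contractVert_iff hS Y).mpr hY)

theorem ThreeEdgeConnected.contract (h3 : ThreeEdgeConnected ends) {S : Set V}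
    (hS : S.Nonempty) : ThreeEdgeConnected (contractEnds ends S) := by
  refine ⟨connected_contractEnds ends hS h3.1, fun Y hY hYc => ?_⟩
  rw [ncard_cut_contractEnds]
  exact h3.2 _ (hY.preimage (contractVert_surjective hS))
    (hYc.preimage (contractVert_surjective hS))

theorem stmt14_general {V E : Type} [Fintype V]
    (ends : E → Sym2 V) (r : ℕ) (hr : 3 ≤ r) (hG : IsRGraph r ends)
    (X : Set V) (hodd : Odd X.ncard) (hcut : (Cut ends X).ncard = r) :
    IsRGraph r (contractEnds ends X) ∧ IsRGraph r (contractEnds ends Xᶜ) ∧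
      (ThreeEdgeConnected ends →
        ThreeEdgeConnected (contractEnds ends X) ∧
          ThreeEdgeConnected (contractEnds ends Xᶜ)) := by
  have hoddc : Odd Xᶜ.ncard := hG.odd_ncard_compl (by omega) hodd
  have hcutc : (Cut ends Xᶜ).ncard = r := by rwa [cut_compl]
  exact ⟨hG.contract hodd hcut, hG.contract hoddc hcutc, fun h3 =>
    ⟨h3.contract (Set.nonempty_of_ncard_ne_zero hodd.pos.ne'),
      h3.contract (Set.nonempty_of_ncard_ne_zero hoddc.pos.ne')⟩⟩

/-- For any odd cut `C = ∂(X)` of an `r`-graph `G` with `|C| = r`, both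
`C`-contractions `G/X` and `G/X̄` are `r`-graphs; moreover, if `G` is
3-edge-connected then both contractions are 3-edge-connected. -/
theorem stmt14 {V E : Type} [Fintype V] [Fintype E]
    (ends : E → Sym2 V) (r : ℕ) (hr : 3 ≤ r) (hG : IsRGraph r ends)
    (X : Set V) (hodd : Odd X.ncard) (hcut : (Cut ends X).ncard = r) :
    IsRGraph r (contractEnds ends X) ∧ IsRGraph r (contractEnds ends Xᶜ) ∧
      (ThreeEdgeConnected ends →
        ThreeEdgeConnected (contractEnds ends X) ∧
          ThreeEdgeConnected (contractEnds ends Xᶜ)) :=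
  stmt14_general ends r hr hG X hodd hcut
end
end
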